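/- For every real a with 0 < a < 1, the improper integral lim_{R→∞} ∫_{-R}^{R} e^{-iu} |u|^{-a} du exists and equals 2 Γ(1-a) sin(πa/2); in particular it is a nonzero complex (in fact positive real) number. -/

import Mathlib

/-!
Write `u ^ (-a) = Γ(a)⁻¹ ∫₀^∞ t^(a-1) e^(-ut) dt`. By Fubini and
`∫₀^R e^(-ut) cos u du = (t + e^(-Rt) (sin R - t cos R)) / (1 + t²)`,
`∫₀^R cos u · u^(-a) du = Γ(a)⁻¹ (∫₀^∞ t^a / (1 + t²) dt + O(Γ(a) R^(-a)))`.
The substitutions `s = t²` and `s = x / (1 - x)` turn the main term into the Beta integral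
`B((1+a)/2, (1-a)/2) / 2 = π / (2 cos (πa/2))`, and the reflection formula rewrites
`Γ(a)⁻¹ π / (2 cos (πa/2))` as `Γ(1-a) sin (πa/2)`. Over `[-R, R]` the odd part `sin u · |u|^(-a)`
cancels, which gives the factor `2`.
-/

open MeasureTheory Filter Real Set

lemma integral_rpow_mul_one_sub_rpow {α β : ℝ} (hα : 0 < α) (hβ : 0 < β) :
    ∫ x in Ioo (0:ℝ) 1, x ^ (α - 1) * (1 - x) ^ (β - 1) = Gamma α * Gamma β / Gamma (α + β) := by
  have h := Complex.betaIntegral_eq_Gamma_mul_div α β (by simpa) (by simpa)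
  rw [Complex.betaIntegral, intervalIntegral.integral_of_le zero_le_one,
    integral_Ioc_eq_integral_Ioo, ← Complex.ofReal_add] at h
  simp only [Complex.Gamma_ofReal] at h
  apply Complex.ofReal_injective
  push_cast
  rw [← h, ← integral_complex_ofReal]
  refine setIntegral_congr_fun measurableSet_Ioo fun x hx => ?_
  push_cast [Complex.ofReal_cpow hx.1.le, Complex.ofReal_cpow (sub_pos.2 hx.2).le]
  rfl

lemma integral_rpow_div_one_add {p : ℝ} (hp0 : 0 < p) (hp1 : p < 1) :
    ∫ s in Ioi (0:ℝ), s ^ (p - 1) / (1 + s) = π / sin (π * p) := by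
  have himage : (fun x : ℝ => x / (1 - x)) '' Ioo 0 1 = Ioi 0 := by
    ext s
    constructor
    · rintro ⟨x, hx, rfl⟩
      exact div_pos hx.1 (sub_pos.2 hx.2)
    · intro (hs : 0 < s)
      refine ⟨s / (1 + s), ⟨by positivity, (div_lt_one (by positivity)).2 (by linarith)⟩, ?_⟩
      field_simp
      ring
  have hderiv : ∀ x ∈ Ioo (0:ℝ) 1,
      HasDerivWithinAt (fun x => x / (1 - x)) (1 / (1 - x) ^ 2) (Ioo 0 1) x := by
    intro x hx
    refine (((hasDerivAt_id' x).div ((hasDerivAt_id' x).const_sub 1)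
      (sub_pos.2 hx.2).ne').congr_deriv ?_).hasDerivWithinAt
    field_simp
    ring
  have hinj : InjOn (fun x : ℝ => x / (1 - x)) (Ioo 0 1) := by
    intro x hx y hy hxy
    have := (div_eq_div_iff (sub_pos.2 hx.2).ne' (sub_pos.2 hy.2).ne').1 hxy
    linarith
  rw [← himage, integral_image_eq_integral_abs_deriv_smul measurableSet_Ioo hderiv hinj]
  calc ∫ x in Ioo (0:ℝ) 1, |1 / (1 - x) ^ 2| • ((x / (1 - x)) ^ (p - 1) / (1 + x / (1 - x)))
      = ∫ x in Ioo (0:ℝ) 1, x ^ (p - 1) * (1 - x) ^ ((1 - p) - 1) := by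
        refine setIntegral_congr_fun measurableSet_Ioo fun x hx => ?_
        have h1x : 0 < 1 - x := sub_pos.2 hx.2
        rw [smul_eq_mul, abs_of_pos (by positivity), div_rpow hx.1.le h1x.le,
          show 1 - p - 1 = -p by ring, rpow_neg h1x.le, rpow_sub_one h1x.ne']
        field_simp
        ring
    _ = Gamma p * Gamma (1 - p) / Gamma (p + (1 - p)) :=
        integral_rpow_mul_one_sub_rpow hp0 (sub_pos.2 hp1)
    _ = π / sin (π * p) := by
        rw [add_sub_cancel, Gamma_one, div_one, Gamma_mul_Gamma_one_sub]

lemma integral_rpow_div_one_add_sq {a : ℝ} (ha0 : -1 < a) (ha1 : a < 1) :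
    ∫ t in Ioi (0:ℝ), t ^ a / (1 + t ^ 2) = π / (2 * cos (π * a / 2)) := by
  have h := integral_comp_rpow_Ioi_of_pos (p := 2) two_pos
    (g := fun s : ℝ => s ^ ((a + 1) / 2 - 1) / (1 + s))
  rw [integral_rpow_div_one_add (by linarith) (by linarith),
    show π * ((a + 1) / 2) = π * a / 2 + π / 2 by ring, sin_add_pi_div_two] at h
  calc ∫ t in Ioi (0:ℝ), t ^ a / (1 + t ^ 2)
      = 2⁻¹ * ∫ x in Ioi (0:ℝ),
          (2 * x ^ ((2:ℝ) - 1)) • ((x ^ (2:ℝ)) ^ ((a + 1) / 2 - 1) / (1 + x ^ (2:ℝ))) := by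
        rw [← integral_const_mul]
        refine setIntegral_congr_fun measurableSet_Ioi fun x (hx : 0 < x) => ?_
        rw [smul_eq_mul, ← rpow_mul hx.le, rpow_two, ← mul_div_assoc, mul_assoc 2,
          ← rpow_add hx]
        ring_nf
    _ = π / (2 * cos (π * a / 2)) := by rw [h]; ring

lemma Gamma_one_sub_mul_sin_pi_mul_div_two {a : ℝ} (h : sin (π * a) ≠ 0) :
    Gamma (1 - a) * sin (π * a / 2) = (Gamma a)⁻¹ * (π / (2 * cos (π * a / 2))) := by
  have hsin : sin (π * a) = 2 * sin (π * a / 2) * cos (π * a / 2) := by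
    rw [← sin_two_mul]; ring_nf
  have hrefl := Gamma_mul_Gamma_one_sub a
  have hcos : cos (π * a / 2) ≠ 0 := fun h0 => h (by rw [hsin, h0, mul_zero])
  have hGamma : Gamma a ≠ 0 := fun h0 => by
    rw [h0, zero_mul, eq_comm, div_eq_zero_iff] at hrefl
    exact hrefl.elim pi_ne_zero h
  rw [hsin] at h hrefl
  rw [eq_div_iff h] at hrefl
  rw [eq_inv_mul_iff_mul_eq₀ hGamma, eq_div_iff (mul_ne_zero two_ne_zero hcos)]
  linear_combination hrefl

lemma integrableOn_rpow_mul_exp_neg_mul {s r : ℝ} (hs : 0 < s) (hr : 0 < r) :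
    IntegrableOn (fun t : ℝ => t ^ (s - 1) * exp (-(r * t))) (Ioi 0) := by
  simpa using integrableOn_rpow_mul_exp_neg_mul_rpow (p := 1) (by linarith : -1 < s - 1) one_pos hr

lemma rpow_neg_eq_inv_Gamma_mul_integral {a u : ℝ} (ha : 0 < a) (hu : 0 < u) :
    u ^ (-a) = (Gamma a)⁻¹ * ∫ t in Ioi 0, t ^ (a - 1) * exp (-(u * t)) := by
  rw [integral_rpow_mul_exp_neg_mul_Ioi ha hu, one_div, inv_rpow hu.le, ← rpow_neg hu.le,
    mul_comm (u ^ (-a)), inv_mul_cancel_left₀ (Gamma_pos_of_pos ha).ne']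

lemma integral_exp_neg_mul_mul_cos (t R : ℝ) :
    ∫ u in (0:ℝ)..R, exp (-(u * t)) * cos u
      = (exp (-(R * t)) * (sin R - t * cos R) + t) / (1 + t ^ 2) := by
  have hderiv (u : ℝ) : HasDerivAt (fun u => exp (-(u * t)) * (sin u - t * cos u) / (1 + t ^ 2))
      (exp (-(u * t)) * cos u) u := by
    refine (((((hasDerivAt_id' u).mul_const t).fun_neg.exp).fun_mul
      ((hasDerivAt_sin u).fun_sub ((hasDerivAt_cos u).const_mul t))).div_const
        (1 + t ^ 2)).congr_deriv ?_
    field_simp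
    ring
  rw [intervalIntegral.integral_eq_sub_of_hasDerivAt (fun u _ => hderiv u)
    (by apply Continuous.intervalIntegrable; fun_prop)]
  simp only [zero_mul, neg_zero, exp_zero, sin_zero, cos_zero]
  ring

lemma integral_Ioc_cos_mul_rpow_neg {a R : ℝ} (ha0 : 0 < a) (ha1 : a < 1) (hR : 0 ≤ R) :
    ∫ u in Ioc 0 R, cos u * u ^ (-a) = (Gamma a)⁻¹ *
      ∫ t in Ioi 0, t ^ (a - 1) * ((exp (-(R * t)) * (sin R - t * cos R) + t) / (1 + t ^ 2)) := by
  set f : ℝ → ℝ → ℝ := fun u t => cos u * (t ^ (a - 1) * exp (-(u * t))) with hf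
  have hint : IntegrableOn (fun u : ℝ => u ^ (-a)) (Ioc 0 R) :=
    (intervalIntegrable_iff_integrableOn_Ioc_of_le hR).1
      (intervalIntegral.intervalIntegrable_rpow' (by linarith))
  have hnorm : ∀ u ∈ Ioc (0:ℝ) R, ∫ t in Ioi 0, ‖f u t‖ = |cos u| * (Gamma a * u ^ (-a)) := by
    intro u hu
    rw [rpow_neg_eq_inv_Gamma_mul_integral ha0 hu.1,
      mul_inv_cancel_left₀ (Gamma_pos_of_pos ha0).ne', ← integral_const_mul]
    refine setIntegral_congr_fun measurableSet_Ioi fun t (ht : 0 < t) => ?_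
    simp only [hf, norm_mul, norm_eq_abs, abs_of_pos (rpow_pos_of_pos ht _),
      abs_of_pos (exp_pos _)]
  have hf_int : Integrable (Function.uncurry f)
      ((volume.restrict (Ioc 0 R)).prod (volume.restrict (Ioi 0))) := by
    have hmeas : Measurable (Function.uncurry f) := by fun_prop
    refine (integrable_prod_iff hmeas.aestronglyMeasurable).2 ⟨?_, ?_⟩
    · filter_upwards [ae_restrict_mem measurableSet_Ioc] with u hu
      exact (integrableOn_rpow_mul_exp_neg_mul ha0 hu.1).const_mul (cos u)
    · refine ((hint.const_mul (Gamma a)).bdd_mul (c := 1)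
        (by fun_prop : Measurable fun u => |cos u|).aestronglyMeasurable
        (ae_of_all _ fun u => by simpa using abs_cos_le_one u)).congr ?_
      filter_upwards [ae_restrict_mem measurableSet_Ioc] with u hu
      exact (hnorm u hu).symm
  calc ∫ u in Ioc 0 R, cos u * u ^ (-a)
      = (Gamma a)⁻¹ * ∫ u in Ioc 0 R, ∫ t in Ioi 0, f u t := by
        rw [← integral_const_mul]
        refine setIntegral_congr_fun measurableSet_Ioc fun u hu => ?_
        rw [rpow_neg_eq_inv_Gamma_mul_integral ha0 hu.1, integral_const_mul]
        ring
    _ = (Gamma a)⁻¹ * ∫ t in Ioi 0, ∫ u in Ioc 0 R, f u t := by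
        rw [integral_integral_swap hf_int]
    _ = _ := by
        congr 1
        refine setIntegral_congr_fun measurableSet_Ioi fun t _ => ?_
        rw [← integral_exp_neg_mul_mul_cos, intervalIntegral.integral_of_le hR,
          ← integral_const_mul]
        refine setIntegral_congr_fun measurableSet_Ioc fun u _ => ?_
        ring

lemma norm_rpow_mul_exp_neg_mul_sin_sub_mul_cos_div_le {a R t : ℝ} (ht : 0 ≤ t) :
    ‖t ^ (a - 1) * (exp (-(R * t)) * (sin R - t * cos R) / (1 + t ^ 2))‖
      ≤ 2 * (t ^ (a - 1) * exp (-(R * t))) := by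
  have hsc : |sin R - t * cos R| ≤ 1 + t := by
    calc |sin R - t * cos R| ≤ |sin R| + t * |cos R| := by
          simpa [abs_mul, abs_of_nonneg ht] using abs_sub (sin R) (t * cos R)
      _ ≤ 1 + t * 1 := by gcongr <;> simp [abs_sin_le_one, abs_cos_le_one]
      _ = 1 + t := by ring
  have hdiv : |exp (-(R * t)) * (sin R - t * cos R) / (1 + t ^ 2)| ≤ 2 * exp (-(R * t)) := by
    rw [abs_div, abs_mul, abs_of_pos (exp_pos _), abs_of_pos (by positivity : (0:ℝ) < 1 + t ^ 2),
      div_le_iff₀ (by positivity)]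
    calc exp (-(R * t)) * |sin R - t * cos R| ≤ exp (-(R * t)) * (1 + t) := by gcongr
      _ ≤ 2 * exp (-(R * t)) * (1 + t ^ 2) := by
          nlinarith [exp_pos (-(R * t)), sq_nonneg (t - 1 / 2)]
  rw [norm_mul, norm_of_nonneg (rpow_nonneg ht _), norm_eq_abs, mul_left_comm]
  exact mul_le_mul_of_nonneg_left hdiv (rpow_nonneg ht _)

lemma integrableOn_rpow_mul_exp_neg_mul_sin_sub_mul_cos_div {a R : ℝ} (ha : 0 < a)
    (hR : 0 < R) :
    IntegrableOn (fun t => t ^ (a - 1) *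
      (exp (-(R * t)) * (sin R - t * cos R) / (1 + t ^ 2))) (Ioi 0) :=
  ((integrableOn_rpow_mul_exp_neg_mul ha hR).const_mul 2).mono' (by fun_prop)
    ((ae_restrict_mem measurableSet_Ioi).mono fun _ ht =>
      norm_rpow_mul_exp_neg_mul_sin_sub_mul_cos_div_le (le_of_lt ht))

lemma tendsto_integral_rpow_mul_exp_neg_mul_sin_sub_mul_cos_div {a : ℝ} (ha : 0 < a) :
    Tendsto (fun R => ∫ t in Ioi 0, t ^ (a - 1) *
      (exp (-(R * t)) * (sin R - t * cos R) / (1 + t ^ 2))) atTop (nhds 0) := by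
  have hbound : ∀ R > 0, ‖∫ t in Ioi 0, t ^ (a - 1) *
      (exp (-(R * t)) * (sin R - t * cos R) / (1 + t ^ 2))‖ ≤ 2 * Gamma a * R ^ (-a) := by
    intro R hR
    refine (norm_integral_le_of_norm_le ((integrableOn_rpow_mul_exp_neg_mul ha hR).const_mul 2)
      ((ae_restrict_mem measurableSet_Ioi).mono fun _ ht =>
        norm_rpow_mul_exp_neg_mul_sin_sub_mul_cos_div_le (le_of_lt ht))).trans_eq ?_
    rw [integral_const_mul, integral_rpow_mul_exp_neg_mul_Ioi ha hR, one_div, inv_rpow hR.le,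
      ← rpow_neg hR.le]
    ring
  have hlim : Tendsto (fun R : ℝ => 2 * Gamma a * R ^ (-a)) atTop (nhds 0) := by
    simpa using (tendsto_rpow_neg_atTop ha).const_mul (2 * Gamma a)
  exact squeeze_zero_norm' ((eventually_gt_atTop 0).mono hbound) hlim

lemma tendsto_integral_Ioc_cos_mul_rpow_neg {a : ℝ} (ha0 : 0 < a) (ha1 : a < 1) :
    Tendsto (fun R => ∫ u in Ioc 0 R, cos u * u ^ (-a)) atTop
      (nhds (Gamma (1 - a) * sin (π * a / 2))) := by
  have hsin : 0 < sin (π * a) := sin_pos_of_pos_of_lt_pi (by positivity) (by nlinarith [pi_pos])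
  have hcos : 0 < cos (π * a / 2) :=
    cos_pos_of_mem_Ioo ⟨by nlinarith [pi_pos], by nlinarith [pi_pos]⟩
  have hmain := integral_rpow_div_one_add_sq (by linarith) ha1
  have hmain_int : IntegrableOn (fun t : ℝ => t ^ a / (1 + t ^ 2)) (Ioi 0) :=
    Integrable.of_integral_ne_zero (by rw [hmain]; positivity)
  have hval : (Gamma a)⁻¹ * ((∫ t in Ioi (0:ℝ), t ^ a / (1 + t ^ 2)) + 0)
      = Gamma (1 - a) * sin (π * a / 2) := by
    rw [add_zero, hmain, Gamma_one_sub_mul_sin_pi_mul_div_two hsin.ne']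
  have h := ((tendsto_integral_rpow_mul_exp_neg_mul_sin_sub_mul_cos_div ha0).const_add
    (∫ t in Ioi (0:ℝ), t ^ a / (1 + t ^ 2))).const_mul (Gamma a)⁻¹
  rw [hval] at h
  refine h.congr' ((eventually_gt_atTop 0).mono fun R hR => ?_)
  dsimp only
  rw [integral_Ioc_cos_mul_rpow_neg ha0 ha1 hR.le,
    ← integral_add hmain_int (integrableOn_rpow_mul_exp_neg_mul_sin_sub_mul_cos_div ha0 hR)]
  congr 1
  refine setIntegral_congr_fun measurableSet_Ioi fun t (ht : 0 < t) => ?_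
  rw [show t ^ a = t ^ (a - 1) * t by rw [← rpow_add_one ht.ne', sub_add_cancel]]
  ring

lemma integral_Icc_neg_eq_integral_Ioc_add {E : Type*} [NormedAddCommGroup E] [NormedSpace ℝ E]
    {f : ℝ → E} {R : ℝ} (hR : 0 ≤ R) (hf : IntegrableOn f (Ioc 0 R))
    (hf_neg : IntegrableOn (fun u => f (-u)) (Ioc 0 R)) :
    ∫ u in Icc (-R) R, f u = ∫ u in Ioc 0 R, (f u + f (-u)) := by
  have hpos : IntervalIntegrable f volume 0 R :=
    (intervalIntegrable_iff_integrableOn_Ioc_of_le hR).2 hf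
  have hneg : IntervalIntegrable f volume (-R) 0 := by
    refine (IntervalIntegrable.iff_comp_neg (f := f)).2 ?_
    simpa using ((intervalIntegrable_iff_integrableOn_Ioc_of_le hR).2 hf_neg).symm
  rw [integral_Icc_eq_integral_Ioc, ← intervalIntegral.integral_of_le (by linarith),
    ← intervalIntegral.integral_add_adjacent_intervals hneg hpos, integral_add hf hf_neg,
    add_comm, ← intervalIntegral.integral_of_le hR, ← intervalIntegral.integral_of_le hR]
  simp [intervalIntegral.integral_comp_neg (a := 0) (b := R) f]

lemma integral_Icc_exp_neg_I_mul_mul_abs_rpow_neg {a R : ℝ} (ha1 : a < 1) (hR : 0 ≤ R) :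
    ∫ u in Icc (-R) R, Complex.exp (-(Complex.I * u)) * ((|u| ^ (-a) : ℝ) : ℂ)
      = ((2 * ∫ u in Ioc 0 R, cos u * u ^ (-a) : ℝ) : ℂ) := by
  have hint : IntegrableOn (fun u : ℝ => u ^ (-a)) (Ioc 0 R) :=
    (intervalIntegrable_iff_integrableOn_Ioc_of_le hR).1
      (intervalIntegral.intervalIntegrable_rpow' (by linarith))
  have hhalf (s : ℝ) (hs : |s| = 1) : IntegrableOn (fun u : ℝ =>
      Complex.exp (-(Complex.I * (s * u : ℝ))) * ((|s * u| ^ (-a) : ℝ) : ℂ)) (Ioc 0 R) :=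
    hint.mono' (by fun_prop) ((ae_restrict_mem measurableSet_Ioc).mono
      fun u (hu : u ∈ Ioc 0 R) => by
        simp [Complex.norm_exp, abs_mul, hs, abs_of_pos hu.1, abs_of_pos (rpow_pos_of_pos hu.1 _)])
  rw [integral_Icc_neg_eq_integral_Ioc_add hR (by simpa using hhalf 1 (by simp))
      (by simpa using hhalf (-1) (by simp)),
    ← integral_const_mul, ← integral_complex_ofReal]
  refine setIntegral_congr_fun measurableSet_Ioc fun u (hu : u ∈ Ioc 0 R) => ?_
  rw [abs_neg, abs_of_pos hu.1, ← add_mul, Complex.ofReal_neg, mul_neg, neg_neg,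
    mul_comm Complex.I, ← neg_mul, add_comm, ← Complex.two_cos]
  push_cast
  ring

/-- For `0 < a < 1` the improper integral
`lim_{R→∞} ∫_{-R}^R e^{-iu} |u|^{-a} du` exists and equals `2 Γ(1-a) sin(πa/2)`,
which is a positive real number. -/
theorem stmt1 (a : ℝ) (ha0 : 0 < a) (ha1 : a < 1) :
    Tendsto (fun R : ℝ =>
        ∫ u in Set.Icc (-R) R,
          Complex.exp (-(Complex.I * (u : ℂ))) * ((|u| ^ (-a) : ℝ) : ℂ))
      atTop
      (nhds ((2 * Real.Gamma (1 - a) * Real.sin (π * a / 2) : ℝ) : ℂ)) ∧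
    0 < 2 * Real.Gamma (1 - a) * Real.sin (π * a / 2) := by
  have hsin : 0 < sin (π * a / 2) :=
    sin_pos_of_pos_of_lt_pi (by positivity) (by nlinarith [pi_pos])
  refine ⟨?_, by have := Gamma_pos_of_pos (sub_pos.2 ha1); positivity⟩
  have h := (tendsto_integral_Ioc_cos_mul_rpow_neg ha0 ha1).const_mul 2
  rw [← mul_assoc, ← tendsto_ofReal_iff] at h
  exact h.congr' ((eventually_ge_atTop 0).mono fun R hR =>
    (integral_Icc_exp_neg_I_mul_mul_abs_rpow_neg ha1 hR).symm)
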